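/- Let α, β, γ be partitions with α₁ ≥ β₁. If α = β then |ᾱ ∩ β̄| + α₁ + β₁ = |α| + α₁; if α ⊊ β then |ᾱ ∩ β̄| + α₁ + β₁ ≤ |β| + β₁ − 1; and if α ⊄ β then |ᾱ ∩ β̄| + α₁ + β₁ ≤ |α| + α₁ − 1. In particular, the bound M₁(α,β;γ) = |γ| + |ᾱ ∩ β̄| + α₁ + β₁ is at most Vallejo's bound M_V(α,β;γ). -/

import Mathlib

open scoped BigOperators Classical

noncomputable section

/-- `f : ℕ → ℕ` represents a partition (0-indexed parts: `f 0` is the first part)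
if it is weakly decreasing and eventually zero. -/
def IsPartit (f : ℕ → ℕ) : Prop :=
  (∀ ⦃i j : ℕ⦄, i ≤ j → f j ≤ f i) ∧ ∃ N, ∀ i, N ≤ i → f i = 0

/-- The weight `|λ|` of a partition: the sum of its parts. -/
def wt (f : ℕ → ℕ) : ℕ := ∑ᶠ i, f i

/-- Frobenius character formula: the (virtual) irreducible character of the symmetric
group `S_n` indexed by the (generalized) partition `f`, evaluated at cycle type `ρ`:
the coefficient of `x^(f + δ)` in the Vandermonde determinant times the power sum `p_ρ`,
in `n` variables. -/
def chiC (n : ℕ) (f : ℕ → ℕ) (ρ : Multiset ℕ) : ℤ :=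
  MvPolynomial.coeff
    (Finsupp.equivFunOnFinite.symm (fun i : Fin n => f i.val + (n - 1 - i.val)))
    ((∏ p ∈ Finset.univ.filter (fun p : Fin n × Fin n => p.1 < p.2),
        (MvPolynomial.X p.1 - MvPolynomial.X p.2)) *
      (ρ.map (fun k => ∑ i : Fin n, (MvPolynomial.X i : MvPolynomial (Fin n) ℤ) ^ k)).prod)

/-- The Kronecker coefficient `g_{f,g}^h` for partitions of `n`, via the character
scalar product `(1/n!) ∑_{σ ∈ S_n} χ_f(σ) χ_g(σ) χ_h(σ)`. -/
def kron (n : ℕ) (f g h : ℕ → ℕ) : ℕ :=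
  ((∑ σ : Equiv.Perm (Fin n),
      chiC n f σ.cycleType * chiC n g σ.cycleType * chiC n h σ.cycleType) /
    (n.factorial : ℤ)).toNat

/-- The Kronecker coefficient `g_{f,g}^h` (zero unless all weights agree). -/
def kron0 (f g h : ℕ → ℕ) : ℕ :=
  if wt g = wt f ∧ wt h = wt f then kron (wt f) f g h else 0

/-- `λ[n] = (n - |λ|, λ₁, λ₂, …)`. -/
def ext (f : ℕ → ℕ) (n : ℕ) : ℕ → ℕ := fun i => if i = 0 then n - wt f else f (i - 1)

/-- The reduced Kronecker coefficient `ḡ_{f,g}^h`: the stable value of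
`g_{f[n],g[n]}^{h[n]}`, realized at the (sufficiently large) index
`n = |f| + |g| + |h| + f₁ + g₁ + h₁`. -/
def rkron (f g h : ℕ → ℕ) : ℕ :=
  kron (wt f + wt g + wt h + f 0 + g 0 + h 0)
    (ext f (wt f + wt g + wt h + f 0 + g 0 + h 0))
    (ext g (wt f + wt g + wt h + f 0 + g 0 + h 0))
    (ext h (wt f + wt g + wt h + f 0 + g 0 + h 0))

/-- The Littlewood–Richardson coefficient `c_{f,g}^h`, via
`⟨Res_{S_a × S_b} χ_h , χ_f ⊗ χ_g⟩` where `a = |f|`, `b = |g|`. -/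
def lr (f g h : ℕ → ℕ) : ℕ :=
  if wt h = wt f + wt g then
    ((∑ σ : Equiv.Perm (Fin (wt f)), ∑ τ : Equiv.Perm (Fin (wt g)),
        chiC (wt f) f σ.cycleType * chiC (wt g) g τ.cycleType *
          chiC (wt f + wt g) h (σ.cycleType + τ.cycleType)) /
      (((wt f).factorial : ℤ) * ((wt g).factorial : ℤ))).toNat
  else 0

/-- The triple Littlewood–Richardson coefficient `c_{f,g,h}^k = ⟨s_f s_g s_h, s_k⟩`. -/
def lr3 (f g h k : ℕ → ℕ) : ℕ :=
  if wt k = wt f + wt g + wt h then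
    ((∑ σ : Equiv.Perm (Fin (wt f)), ∑ τ : Equiv.Perm (Fin (wt g)),
        ∑ υ : Equiv.Perm (Fin (wt h)),
        chiC (wt f) f σ.cycleType * chiC (wt g) g τ.cycleType *
          chiC (wt h) h υ.cycleType *
          chiC (wt f + wt g + wt h) k (σ.cycleType + τ.cycleType + υ.cycleType)) /
      (((wt f).factorial : ℤ) * ((wt g).factorial : ℤ) * ((wt h).factorial : ℤ))).toNat
  else 0

/-- `λ̄ = (λ₂, λ₃, …)`: remove the first part. -/
def pbar (f : ℕ → ℕ) : ℕ → ℕ := fun i => f (i + 1)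

/-- Componentwise minimum (intersection) of partitions. -/
def pmin (f g : ℕ → ℕ) : ℕ → ℕ := fun i => min (f i) (g i)

/-- `E_{k+1} f`: erase the part with (0-based) index `k`. -/
def perase (f : ℕ → ℕ) (k : ℕ) : ℕ → ℕ := fun i => if i < k then f i else f (i + 1)

/-- `f^{†(k+1)}`: add `1` to the parts of index `< k` and delete the part of index `k`. -/
def pdag (f : ℕ → ℕ) (k : ℕ) : ℕ → ℕ := fun i => if i < k then f i + 1 else f (i + 1)

/-- The length `ℓ(f)`: the number of nonzero parts (for a partition). -/
def plen (f : ℕ → ℕ) : ℕ := sInf {n | f n = 0}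


/-!
Write `|λ| = λ₁ + |λ̄|`. Since `ᾱ ∩ β̄ ⊆ ᾱ`, the quantity `|ᾱ ∩ β̄| + α₁ + β₁` is at most
`|α| + β₁`. If `α ⊊ β` then `ᾱ ∩ β̄ = ᾱ` and `|α| < |β|`, which gives the middle bound. If
`α ⊄ β`, then either `β₁ < α₁`, or some part of `ᾱ` exceeds the corresponding part of `β̄`, so
that `|ᾱ ∩ β̄| < |ᾱ|`; together with `β₁ ≤ α₁` both cases lose at least one against `|α| + α₁`.
Vallejo's bound is then a case analysis on these three estimates.
-/

open Finset Filter

lemma IsPartit.eventually_eq_zero {f : ℕ → ℕ} (hf : IsPartit f) : ∀ᶠ i in atTop, f i = 0 :=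
  eventually_atTop.2 hf.2

section Weight

variable {f g : ℕ → ℕ}

lemma wt_eq_sum_range {N : ℕ} (hf : ∀ i ≥ N, f i = 0) : wt f = ∑ i ∈ range N, f i :=
  finsum_eq_finsetSum_of_support_subset f fun i hi ↦ by
    by_contra hiN
    exact hi (hf i (by simpa using hiN))

lemma wt_eq_add_wt_pbar (hf : ∀ᶠ i in atTop, f i = 0) : wt f = f 0 + wt (pbar f) := by
  obtain ⟨N, hN⟩ := eventually_atTop.1 hf
  rw [wt_eq_sum_range (N := N + 1) fun i hi ↦ hN i (by omega), sum_range_succ',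
    wt_eq_sum_range (f := pbar f) (N := N) fun i hi ↦ hN (i + 1) (by omega), add_comm]
  rfl

lemma wt_le_wt (hg : ∀ᶠ i in atTop, g i = 0) (h : f ≤ g) : wt f ≤ wt g := by
  obtain ⟨N, hN⟩ := eventually_atTop.1 hg
  rw [wt_eq_sum_range hN, wt_eq_sum_range fun i hi ↦ Nat.eq_zero_of_le_zero (hN i hi ▸ h i)]
  exact sum_le_sum fun i _ ↦ h i

lemma wt_lt_wt (hg : ∀ᶠ i in atTop, g i = 0) (h : f < g) : wt f < wt g := by
  obtain ⟨N, hN⟩ := eventually_atTop.1 hg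
  obtain ⟨hle, j, hj⟩ := Pi.lt_def.1 h
  have hjN : j < N := by
    by_contra! hjN
    rw [hN j hjN] at hj
    exact Nat.not_lt_zero _ hj
  rw [wt_eq_sum_range hN, wt_eq_sum_range fun i hi ↦ Nat.eq_zero_of_le_zero (hN i hi ▸ hle i)]
  exact sum_lt_sum (fun i _ ↦ hle i) ⟨j, mem_range.2 hjN, hj⟩

end Weight

lemma pbar_mono : Monotone pbar := fun _ _ h i ↦ h (i + 1)

section Intersection

variable {α β : ℕ → ℕ}

lemma wt_pmin_pbar_self_add (hα : ∀ᶠ i in atTop, α i = 0) :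
    wt (pmin (pbar α) (pbar α)) + α 0 + α 0 = wt α + α 0 := by
  rw [show pmin (pbar α) (pbar α) = pbar α from inf_idem _, wt_eq_add_wt_pbar hα]
  omega

lemma wt_pmin_pbar_add_lt_of_lt (hα : ∀ᶠ i in atTop, α i = 0) (hβ : ∀ᶠ i in atTop, β i = 0)
    (h : α < β) : wt (pmin (pbar α) (pbar β)) + α 0 + β 0 < wt β + β 0 := by
  have hmin : pmin (pbar α) (pbar β) = pbar α := inf_eq_left.2 (pbar_mono h.le)
  have hwt := wt_lt_wt hβ h
  rw [wt_eq_add_wt_pbar hα] at hwt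
  rw [hmin]
  omega

lemma wt_pmin_pbar_add_lt_of_not_le (hα : ∀ᶠ i in atTop, α i = 0) (h0 : β 0 ≤ α 0)
    (h : ¬ α ≤ β) : wt (pmin (pbar α) (pbar β)) + α 0 + β 0 < wt α + α 0 := by
  have hαbar : ∀ᶠ i in atTop, pbar α i = 0 := (tendsto_add_atTop_nat 1).eventually hα
  rw [wt_eq_add_wt_pbar hα]
  by_cases hbar : pbar α ≤ pbar β
  · -- the excess of `α` over `β` sits in the first part
    have hlt0 : β 0 < α 0 := by
      by_contra! hle0
      exact h fun | 0 => hle0 | i + 1 => hbar i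
    have : wt (pmin (pbar α) (pbar β)) ≤ wt (pbar α) := wt_le_wt hαbar inf_le_left
    omega
  · have : wt (pmin (pbar α) (pbar β)) < wt (pbar α) := wt_lt_wt hαbar (inf_lt_left.2 hbar)
    omega

end Intersection

theorem stmt16_general (α β γ : ℕ → ℕ) (hα : IsPartit α) (hβ : IsPartit β)
    (h1 : β 0 ≤ α 0) :
    (α = β → wt (pmin (pbar α) (pbar β)) + α 0 + β 0 = wt α + α 0) ∧
    ((α ≠ β ∧ ∀ i, α i ≤ β i) →
      wt (pmin (pbar α) (pbar β)) + α 0 + β 0 ≤ wt β + β 0 - 1) ∧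
    ((¬ ∀ i, α i ≤ β i) →
      wt (pmin (pbar α) (pbar β)) + α 0 + β 0 ≤ wt α + α 0 - 1) ∧
    (wt γ + wt (pmin (pbar α) (pbar β)) + α 0 + β 0 ≤
      wt γ + (if α = β then max (wt α + α 0) (wt γ)
        else max (max (wt α + α 0 - 1) (wt β + β 0 - 1)) (wt γ))) := by
  have equal : α = β → wt (pmin (pbar α) (pbar β)) + α 0 + β 0 = wt α + α 0 := by
    rintro rfl
    exact wt_pmin_pbar_self_add hα.eventually_eq_zero
  have contained : α < β → wt (pmin (pbar α) (pbar β)) + α 0 + β 0 < wt β + β 0 :=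
    wt_pmin_pbar_add_lt_of_lt hα.eventually_eq_zero hβ.eventually_eq_zero
  have not_contained : ¬ α ≤ β → wt (pmin (pbar α) (pbar β)) + α 0 + β 0 < wt α + α 0 :=
    wt_pmin_pbar_add_lt_of_not_le hα.eventually_eq_zero h1
  refine ⟨equal, fun ⟨hne, hle⟩ ↦ ?_, fun h ↦ ?_, ?_⟩
  · have := contained (lt_of_le_of_ne hle hne)
    omega
  · have := not_contained h
    omega
  · split_ifs with hab
    · have := equal hab
      omega
    · by_cases hle : α ≤ β
      · have := contained (lt_of_le_of_ne hle hab)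
        omega
      · have := not_contained hle
        omega

/-- Assume `α₁ ≥ β₁`. If `α = β` then `|ᾱ ∩ β̄| + α₁ + β₁ = |α| + α₁`;
if `α ⊊ β` then `|ᾱ ∩ β̄| + α₁ + β₁ ≤ |β| + β₁ - 1`; if `α ⊄ β` then
`|ᾱ ∩ β̄| + α₁ + β₁ ≤ |α| + α₁ - 1`. In particular `M₁(α,β;γ) ≤ M_V(α,β;γ)`. -/
theorem stmt16 (α β γ : ℕ → ℕ) (hα : IsPartit α) (hβ : IsPartit β) (hγ : IsPartit γ)
    (h1 : β 0 ≤ α 0) :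
    (α = β → wt (pmin (pbar α) (pbar β)) + α 0 + β 0 = wt α + α 0) ∧
    ((α ≠ β ∧ ∀ i, α i ≤ β i) →
      wt (pmin (pbar α) (pbar β)) + α 0 + β 0 ≤ wt β + β 0 - 1) ∧
    ((¬ ∀ i, α i ≤ β i) →
      wt (pmin (pbar α) (pbar β)) + α 0 + β 0 ≤ wt α + α 0 - 1) ∧
    (wt γ + wt (pmin (pbar α) (pbar β)) + α 0 + β 0 ≤
      wt γ + (if α = β then max (wt α + α 0) (wt γ)
        else max (max (wt α + α 0 - 1) (wt β + β 0 - 1)) (wt γ))) :=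
  stmt16_general α β γ hα hβ h1
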